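/- Let Φ be a crystallographic root system, let R ⊆ Φ be non-empty, and let Φ' be a root subsystem of Φ containing R. If L(Φ') = L(R) and L((Φ')^∨) = L(R^∨), then W_{Φ'} = W_R. -/

import Mathlib

/-!
The roots of `Φ'` whose reflection lies in `W_R` (`weylRoots R Φ'`) contain `R` and are stable
under negation and under `W_R`, so by the lattice hypotheses every `β ∈ Φ'` is a sum of such
roots and `β^∨` a sum of their coroots. We show `s_β ∈ W_R` by induction on the lengths of these
two sums, ordered lexicographically (coroot sum first), using `s_{s_η β} = s_η s_β s_η`.
If a summand `η^∨` of `β^∨` has `⟪η, β^∨⟫ = 1`, then `(s_η β)^∨ = β^∨ - η^∨` has a shorter sum.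
Otherwise some summand `x` with `⟪β, x⟫ > 0` has `2‖β‖² ≤ ‖x‖²`. Then every summand `η ≠ β` of
`β` with `⟪β, η⟫ > 0` satisfies `s_η β = β - η`: by the crystallographic angle restrictions a
root too short for this would be orthogonal to both `x` and `s_β x`, hence to `β`. So `s_η β`
has a shorter root sum, and `s_η` carries the coroot sum of `β` to one of `s_η β` of the same
length.
-/

open RealInnerProductSpace Submodule

variable {V : Type*} [NormedAddCommGroup V] [InnerProductSpace ℝ V] [FiniteDimensional ℝ V]

/-- The orthogonal reflection in the hyperplane `α^⊥`. -/
noncomputable def sRefl (α : V) : V ≃ₗᵢ[ℝ] V := reflection (ℝ ∙ α)ᗮ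

/-- `Φ` is a root system in `V`. -/
def IsRootSystem (Φ : Set V) : Prop :=
  Φ.Finite ∧ (0 : V) ∉ Φ ∧ span ℝ Φ = ⊤ ∧
    (∀ α ∈ Φ, ∀ β ∈ Φ, sRefl α β ∈ Φ) ∧
    (∀ α ∈ Φ, ∀ r : ℝ, r • α ∈ Φ → r = 1 ∨ r = -1)

/-- `Φ` is crystallographic. -/
def IsCrystallographic (Φ : Set V) : Prop :=
  ∀ α ∈ Φ, ∀ β ∈ Φ, ∃ k : ℤ, 2 * ⟪α, β⟫ / ⟪α, α⟫ = (k : ℝ)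

/-- `Φ'` is a root subsystem of `Φ`. -/
def IsRootSubsystem (Φ Φ' : Set V) : Prop :=
  Φ' ⊆ Φ ∧ ∀ α ∈ Φ', ∀ β ∈ Φ', sRefl α β ∈ Φ'

/-- The coroot `α^∨ = 2α/(α|α)`. -/
noncomputable def coroot (α : V) : V := (2 / ⟪α, α⟫) • α

/-- The subgroup `W_R` of the orthogonal group of `V` generated by the reflections
`s_α`, `α ∈ R`. -/
noncomputable def weylGroup (R : Set V) : Subgroup (V ≃ₗᵢ[ℝ] V) :=
  Subgroup.closure (sRefl '' R)

section Reflections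

variable {E : Type*} [NormedAddCommGroup E] [InnerProductSpace ℝ E]

lemma inner_coroot (u v : E) : ⟪u, coroot v⟫ = 2 * ⟪u, v⟫ / ⟪v, v⟫ := by
  rw [coroot, real_inner_smul_right]
  ring

lemma inner_coroot_self {v : E} (hv : v ≠ 0) : ⟪v, coroot v⟫ = 2 := by
  rw [inner_coroot, mul_div_assoc, div_self (inner_self_ne_zero.mpr hv), mul_one]

lemma inner_coroot_pos_iff (u : E) {v : E} (hv : v ≠ 0) :
    0 < ⟪u, coroot v⟫ ↔ 0 < ⟪u, v⟫ := by
  have hvv : 0 < ⟪v, v⟫ := real_inner_self_pos.mpr hv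
  rw [inner_coroot, div_pos_iff_of_pos_right hvv]
  constructor <;> intro h <;> linarith

lemma coroot_neg (v : E) : coroot (-v) = -coroot v := by
  simp [coroot]

lemma coroot_map (f : E ≃ₗᵢ[ℝ] E) (v : E) : coroot (f v) = f (coroot v) := by
  rw [coroot, coroot, f.inner_map_map, map_smul]

lemma sum_map_coroot_map (f : E ≃ₗᵢ[ℝ] E) (l : List E) :
    ((l.map f).map coroot).sum = f (l.map coroot).sum := by
  rw [map_list_sum, List.map_map, List.map_map]
  exact congrArg List.sum (List.map_congr_left fun v _ => coroot_map f v)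

lemma sRefl_apply (α v : E) : sRefl α v = v - ⟪v, coroot α⟫ • α := by
  rw [sRefl, reflection_orthogonal_apply, reflection_singleton_apply, inner_coroot,
    real_inner_comm]
  simp only [RCLike.ofReal_real_eq_id, id, ← real_inner_self_eq_norm_sq]
  rw [two_smul]
  module

lemma sRefl_self (α : E) : sRefl α α = -α :=
  reflection_orthogonalComplement_singleton_eq_neg α

lemma sRefl_inv (α : E) : (sRefl α)⁻¹ = sRefl α :=
  reflection_inv

lemma sRefl_neg (α : E) : sRefl (-α) = sRefl α := by
  ext v
  simp [sRefl_apply, coroot]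

lemma sRefl_map (f : E ≃ₗᵢ[ℝ] E) (α : E) : sRefl (f α) = f * sRefl α * f⁻¹ := by
  ext v
  have hv : ⟪v, f (coroot α)⟫ = ⟪f.symm v, coroot α⟫ := by
    rw [← f.inner_map_map (f.symm v), f.apply_symm_apply]
  simp only [LinearIsometryEquiv.coe_mul, LinearIsometryEquiv.coe_inv, Function.comp_apply,
    sRefl_apply, coroot_map, hv, map_sub, map_smul, f.apply_symm_apply]

lemma sRefl_map_mem_iff {W : Subgroup (E ≃ₗᵢ[ℝ] E)} {f : E ≃ₗᵢ[ℝ] E} (hf : f ∈ W) (α : E) :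
    sRefl (f α) ∈ W ↔ sRefl α ∈ W := by
  rw [sRefl_map, Subgroup.mul_mem_cancel_right W (inv_mem hf), Subgroup.mul_mem_cancel_left W hf]

lemma coroot_sRefl (α β : E) : coroot (sRefl α β) = coroot β - ⟪α, coroot β⟫ • coroot α := by
  rw [coroot_map, sRefl_apply]
  congr 1
  simp only [coroot, real_inner_smul_left, real_inner_smul_right, smul_smul, real_inner_comm α β]
  congr 1
  ring

end Reflections

section RootSystem

variable {E : Type*} [NormedAddCommGroup E] [InnerProductSpace ℝ E] {Φ : Set E} {u v : E}

lemma IsRootSystem.ne_zero (hΦ : IsRootSystem Φ) (hu : u ∈ Φ) : u ≠ 0 :=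
  fun h => hΦ.2.1 (h ▸ hu)

lemma IsRootSystem.inner_self_pos (hΦ : IsRootSystem Φ) (hu : u ∈ Φ) : 0 < ⟪u, u⟫ :=
  real_inner_self_pos.mpr (hΦ.ne_zero hu)

lemma IsCrystallographic.exists_inner_coroot_eq (hcr : IsCrystallographic Φ) (hu : u ∈ Φ)
    (hv : v ∈ Φ) : ∃ k : ℤ, ⟪v, coroot u⟫ = k := by
  obtain ⟨k, hk⟩ := hcr u hu v hv
  exact ⟨k, by rw [inner_coroot, real_inner_comm, hk]⟩

lemma inner_coroot_mul_inner_coroot_le_four (u v : E) : ⟪u, coroot v⟫ * ⟪v, coroot u⟫ ≤ 4 := by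
  have hcs := real_inner_mul_inner_self_le u v
  rw [inner_coroot, inner_coroot, real_inner_comm u v]
  calc 2 * ⟪u, v⟫ / ⟪v, v⟫ * (2 * ⟪u, v⟫ / ⟪u, u⟫)
      = 4 * (⟪u, v⟫ * ⟪u, v⟫ / (⟪u, u⟫ * ⟪v, v⟫)) := by ring
    _ ≤ 4 * 1 := by
      gcongr
      exact div_le_one_of_le₀ hcs (mul_nonneg real_inner_self_nonneg real_inner_self_nonneg)
    _ = 4 := mul_one 4

-- Equality in Cauchy–Schwarz forces `v ∈ ℝ ∙ u`, hence `v = ±u` as `Φ` is reduced.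
lemma IsRootSystem.inner_coroot_mul_inner_coroot_lt_four (hΦ : IsRootSystem Φ) (hu : u ∈ Φ)
    (hv : v ∈ Φ) (hvu : v ≠ u) (hvu' : v ≠ -u) : ⟪u, coroot v⟫ * ⟪v, coroot u⟫ < 4 := by
  refine (inner_coroot_mul_inner_coroot_le_four u v).lt_of_ne fun h4 => ?_
  have huu := hΦ.inner_self_pos hu
  have hvv := hΦ.inner_self_pos hv
  have hcs : ‖⟪u, v⟫‖ = ‖u‖ * ‖v‖ := by
    rw [inner_coroot, inner_coroot, real_inner_comm u v] at h4
    have hsq : ⟪u, v⟫ ^ 2 = (‖u‖ * ‖v‖) ^ 2 := by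
      rw [mul_pow, ← real_inner_self_eq_norm_sq, ← real_inner_self_eq_norm_sq]
      field_simp at h4
      linarith
    rw [Real.norm_eq_abs, ← sq_eq_sq₀ (abs_nonneg _) (by positivity), sq_abs, hsq]
  obtain ⟨r, -, rfl⟩ := (norm_inner_eq_norm_iff (hΦ.ne_zero hu) (hΦ.ne_zero hv)).mp hcs
  rcases hΦ.2.2.2.2 u hu r hv with rfl | rfl
  · exact hvu (one_smul ℝ u)
  · exact hvu' (neg_one_smul ℝ u)

lemma IsRootSystem.inner_coroot_eq_one (hΦ : IsRootSystem Φ) (hcr : IsCrystallographic Φ)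
    (hu : u ∈ Φ) (hv : v ∈ Φ) (hpos : 0 < ⟪u, v⟫) (hne : u ≠ v) (hle : ⟪u, u⟫ ≤ ⟪v, v⟫) :
    ⟪u, coroot v⟫ = 1 := by
  obtain ⟨a, ha⟩ := hcr.exists_inner_coroot_eq hv hu
  obtain ⟨b, hb⟩ := hcr.exists_inner_coroot_eq hu hv
  have hvu' : v ≠ -u := by
    rintro rfl
    rw [inner_neg_right] at hpos
    linarith [hΦ.inner_self_pos hu]
  have hab := hΦ.inner_coroot_mul_inner_coroot_lt_four hu hv (Ne.symm hne) hvu'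
  have ha0 : 0 < ⟪u, coroot v⟫ := (inner_coroot_pos_iff u (hΦ.ne_zero hv)).mpr hpos
  have hab' : ⟪u, coroot v⟫ ≤ ⟪v, coroot u⟫ := by
    rw [inner_coroot, inner_coroot, real_inner_comm u v]
    exact div_le_div_of_nonneg_left (by linarith) (hΦ.inner_self_pos hu) hle
  simp only [ha, hb] at hab hab' ha0 ⊢
  have ha1 : a = 1 := by
    have h0 : 0 < a := by exact_mod_cast ha0
    have hle' : a ≤ b := by exact_mod_cast hab'
    have hlt : a * b < 4 := by exact_mod_cast hab
    nlinarith
  rw [ha1, Int.cast_one]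

lemma IsRootSystem.two_mul_inner_self_le (hΦ : IsRootSystem Φ) (hcr : IsCrystallographic Φ)
    (hu : u ∈ Φ) (hv : v ∈ Φ) (hpos : 0 < ⟪u, v⟫) (hlt : ⟪u, u⟫ < ⟪v, v⟫) :
    2 * ⟪u, u⟫ ≤ ⟪v, v⟫ := by
  have huu := hΦ.inner_self_pos hu
  have h1 := hΦ.inner_coroot_eq_one hcr hu hv hpos (by rintro rfl; exact hlt.false) hlt.le
  obtain ⟨b, hb⟩ := hcr.exists_inner_coroot_eq hu hv
  have h2 : 2 * ⟪u, v⟫ = ⟪v, v⟫ := by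
    rwa [inner_coroot, div_eq_one_iff_eq (hΦ.inner_self_pos hv).ne'] at h1
  have hbv : ⟪v, coroot u⟫ * ⟪u, u⟫ = ⟪v, v⟫ := by
    rw [inner_coroot, real_inner_comm u v, h2]
    field_simp
  have hb2 : (2 : ℝ) ≤ b := by
    have : (1 : ℝ) < b := by rw [← hb]; nlinarith
    exact_mod_cast (show (1 : ℤ) < b by exact_mod_cast this)
  rw [← hbv, hb]
  nlinarith

lemma IsRootSystem.inner_eq_zero_of_four_mul_le (hΦ : IsRootSystem Φ) (hcr : IsCrystallographic Φ)
    (hu : u ∈ Φ) (hv : v ∈ Φ) (h4 : 4 * ⟪u, u⟫ ≤ ⟪v, v⟫) : ⟪u, v⟫ = 0 := by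
  have huu := hΦ.inner_self_pos hu
  have hvv := hΦ.inner_self_pos hv
  have hvu : v ≠ u := by rintro rfl; linarith
  have hvu' : v ≠ -u := by rintro rfl; rw [inner_neg_neg] at h4; linarith
  have hab := hΦ.inner_coroot_mul_inner_coroot_lt_four hu hv hvu hvu'
  obtain ⟨a, ha⟩ := hcr.exists_inner_coroot_eq hv hu
  obtain ⟨b, hb⟩ := hcr.exists_inner_coroot_eq hu hv
  have hba : ⟪v, coroot u⟫ * ⟪u, u⟫ = ⟪u, coroot v⟫ * ⟪v, v⟫ := by
    rw [inner_coroot, inner_coroot, real_inner_comm u v]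
    field_simp
  rw [ha, hb] at hab hba
  have ha0 : a = 0 := by
    have hsq : (a : ℝ) ^ 2 * 4 * ⟪u, u⟫ ≤ a * b * ⟪u, u⟫ := by
      calc (a : ℝ) ^ 2 * 4 * ⟪u, u⟫ ≤ a ^ 2 * ⟪v, v⟫ := by rw [mul_assoc]; gcongr
        _ = a * b * ⟪u, u⟫ := by rw [mul_assoc, hba]; ring
    have : (a : ℝ) ^ 2 < 1 := by nlinarith [le_of_mul_le_mul_right hsq huu]
    have : a ^ 2 < 1 := by exact_mod_cast this
    nlinarith
  rw [ha0, Int.cast_zero, inner_coroot, div_eq_zero_iff] at ha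
  rcases ha with h | h <;> linarith

lemma IsRootSystem.inner_coroot_eq_one_of_long {β x η : E} (hΦ : IsRootSystem Φ)
    (hcr : IsCrystallographic Φ) (hβ : β ∈ Φ) (hx : x ∈ Φ) (hη : η ∈ Φ) (hβx : 0 < ⟪β, x⟫)
    (hlong : 2 * ⟪β, β⟫ ≤ ⟪x, x⟫) (hβη : 0 < ⟪β, η⟫) (hne : β ≠ η) : ⟪β, coroot η⟫ = 1 := by
  by_cases hle : ⟪β, β⟫ ≤ ⟪η, η⟫
  · exact hΦ.inner_coroot_eq_one hcr hβ hη hβη hne hle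
  exfalso
  have hshort := hΦ.two_mul_inner_self_le hcr hη hβ (by rwa [real_inner_comm]) (not_le.mp hle)
  have hsx : sRefl β x ∈ Φ := hΦ.2.2.2.1 β hβ x hx
  have hηx := hΦ.inner_eq_zero_of_four_mul_le hcr hη hx (by linarith)
  have hηsx := hΦ.inner_eq_zero_of_four_mul_le hcr hη hsx
    (by rw [LinearIsometryEquiv.inner_map_map]; linarith)
  have hxβ : 0 < ⟪x, coroot β⟫ := by
    rw [inner_coroot_pos_iff x (hΦ.ne_zero hβ), real_inner_comm]; exact hβx
  rw [sRefl_apply, inner_sub_right, inner_smul_right, hηx, zero_sub, neg_eq_zero,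
    mul_eq_zero, real_inner_comm β η] at hηsx
  rcases hηsx with h | h <;> linarith

lemma exists_mem_inner_pos_of_sum_map_eq {ι : Type*} {f : ι → E} {l : List ι} {w : E}
    (hsum : (l.map f).sum = v) (hpos : 0 < ⟪w, v⟫) : ∃ u ∈ l, 0 < ⟪w, f u⟫ := by
  refine List.exists_lt_of_sum_lt (fun _ => (0 : ℝ)) (fun u => ⟪w, f u⟫) ?_
  have hmap : (l.map fun u => ⟪w, f u⟫) = (l.map f).map (innerₛₗ ℝ w) := by simp
  rwa [List.map_const', List.sum_replicate, smul_zero, hmap, ← map_list_sum, hsum]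

lemma IsRootSystem.exists_eq_or_long_of_sum_coroot_eq {β : E} {l : List E}
    (hΦ : IsRootSystem Φ) (hcr : IsCrystallographic Φ) (hβ : β ∈ Φ) (hl : ∀ u ∈ l, u ∈ Φ)
    (hsum : (l.map coroot).sum = coroot β) (hne : ∀ η ∈ l, ⟪η, coroot β⟫ ≠ 1) :
    ∃ x ∈ l, x = β ∨ 0 < ⟪β, x⟫ ∧ 2 * ⟪β, β⟫ ≤ ⟪x, x⟫ := by
  obtain ⟨x, hx, hβx⟩ := exists_mem_inner_pos_of_sum_map_eq hsum
    (by rw [inner_coroot_self (hΦ.ne_zero hβ)]; exact two_pos)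
  rw [inner_coroot_pos_iff β (hΦ.ne_zero (hl x hx))] at hβx
  refine ⟨x, hx, or_iff_not_imp_left.mpr fun hxβ => ⟨hβx, ?_⟩⟩
  refine hΦ.two_mul_inner_self_le hcr hβ (hl x hx) hβx (not_le.mp fun hle => hne x hx ?_)
  exact hΦ.inner_coroot_eq_one hcr (hl x hx) hβ (by rwa [real_inner_comm]) hxβ hle

lemma IsRootSystem.exists_eq_or_inner_coroot_eq_one_of_sum_eq {β x : E} {l : List E}
    (hΦ : IsRootSystem Φ) (hcr : IsCrystallographic Φ) (hβ : β ∈ Φ) (hx : x ∈ Φ)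
    (hl : ∀ u ∈ l, u ∈ Φ) (hsum : l.sum = β) (hβx : 0 < ⟪β, x⟫) (hlong : 2 * ⟪β, β⟫ ≤ ⟪x, x⟫) :
    ∃ η ∈ l, η = β ∨ ⟪β, coroot η⟫ = 1 := by
  obtain ⟨η, hη, hβη⟩ := exists_mem_inner_pos_of_sum_map_eq (f := id) (by rwa [List.map_id])
    (hΦ.inner_self_pos hβ)
  refine ⟨η, hη, or_iff_not_imp_left.mpr fun hηβ => ?_⟩
  exact hΦ.inner_coroot_eq_one_of_long hcr hβ hx (hl η hη) hβx hlong hβη (Ne.symm hηβ)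

end RootSystem

lemma exists_list_sum_map_eq_of_mem_span_int {M N : Type*} [AddCommGroup N] {f : M → N}
    {s : Set M} (hs : ∀ w ∈ f '' s, -w ∈ f '' s) {w : N} (hw : w ∈ span ℤ (f '' s)) :
    ∃ l : List M, (∀ u ∈ l, u ∈ s) ∧ (l.map f).sum = w := by
  rw [← mem_toAddSubgroup, span_int_eq_addSubgroupClosure, ← AddSubgroup.mem_toAddSubmonoid,
    AddSubgroup.closure_toAddSubmonoid] at hw
  obtain ⟨l, hl, rfl⟩ := AddSubmonoid.exists_list_of_mem_closure hw
  have hrange : l ∈ Set.range (List.map (f ∘ ((↑) : s → M))) := by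
    rw [Set.range_list_map, Set.range_comp, Subtype.range_coe]
    intro x hx
    rcases hl x hx with h | h
    · exact h
    · simpa using hs _ h
  obtain ⟨l', rfl⟩ := hrange
  exact ⟨l'.map (↑), fun u hu => by obtain ⟨x, -, rfl⟩ := List.mem_map.mp hu; exact x.2, by simp⟩

section Weyl

variable {E : Type*} [NormedAddCommGroup E] [InnerProductSpace ℝ E] {Φ Φ' R : Set E} {v : E}

def weylRoots (R Φ' : Set E) : Set E := {v | v ∈ Φ' ∧ sRefl v ∈ weylGroup R}

lemma subset_weylRoots (hR : R ⊆ Φ') : R ⊆ weylRoots R Φ' :=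
  fun γ hγ => ⟨hR hγ, Subgroup.subset_closure ⟨γ, hγ, rfl⟩⟩

lemma IsRootSubsystem.neg_mem (hsub : IsRootSubsystem Φ Φ') (hv : v ∈ Φ') : -v ∈ Φ' :=
  sRefl_self v ▸ hsub.2 v hv v hv

lemma IsRootSubsystem.neg_mem_weylRoots (hsub : IsRootSubsystem Φ Φ') (hv : v ∈ weylRoots R Φ') :
    -v ∈ weylRoots R Φ' :=
  ⟨hsub.neg_mem hv.1, by rw [sRefl_neg]; exact hv.2⟩

lemma IsRootSubsystem.weylGroup_apply_mem (hsub : IsRootSubsystem Φ Φ') (hR : R ⊆ Φ')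
    {g : E ≃ₗᵢ[ℝ] E} (hg : g ∈ weylGroup R) (hv : v ∈ Φ') : g v ∈ Φ' := by
  induction hg using Subgroup.closure_induction'' generalizing v with
  | mem _ hx =>
    obtain ⟨γ, hγ, rfl⟩ := hx
    exact hsub.2 γ (hR hγ) v hv
  | inv_mem _ hx =>
    obtain ⟨γ, hγ, rfl⟩ := hx
    rw [sRefl_inv]
    exact hsub.2 γ (hR hγ) v hv
  | one => exact hv
  | mul _ _ _ _ hx hy => exact hx (hy hv)

lemma IsRootSubsystem.weylGroup_apply_mem_weylRoots (hsub : IsRootSubsystem Φ Φ') (hR : R ⊆ Φ')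
    {g : E ≃ₗᵢ[ℝ] E} (hg : g ∈ weylGroup R) (hv : v ∈ weylRoots R Φ') : g v ∈ weylRoots R Φ' :=
  ⟨hsub.weylGroup_apply_mem hR hg hv.1, (sRefl_map_mem_iff hg v).mpr hv.2⟩

lemma IsRootSubsystem.exists_list_weylRoots_sum_eq (hsub : IsRootSubsystem Φ Φ') (hR : R ⊆ Φ')
    (hL : span ℤ Φ' = span ℤ R) (hv : v ∈ Φ') :
    ∃ l : List E, (∀ u ∈ l, u ∈ weylRoots R Φ') ∧ l.sum = v := by
  have hv' : v ∈ span ℤ (id '' weylRoots R Φ') := by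
    rw [Set.image_id]
    exact span_mono (subset_weylRoots hR) (hL ▸ subset_span hv)
  simpa using exists_list_sum_map_eq_of_mem_span_int
    (by simpa using fun w hw => hsub.neg_mem_weylRoots hw) hv'

lemma IsRootSubsystem.exists_list_weylRoots_sum_coroot_eq (hsub : IsRootSubsystem Φ Φ')
    (hR : R ⊆ Φ') (hLvee : span ℤ (coroot '' Φ') = span ℤ (coroot '' R)) (hv : v ∈ Φ') :
    ∃ l : List E, (∀ u ∈ l, u ∈ weylRoots R Φ') ∧ (l.map coroot).sum = coroot v := by
  refine exists_list_sum_map_eq_of_mem_span_int ?_ ?_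
  · rintro _ ⟨u, hu, rfl⟩
    exact ⟨-u, hsub.neg_mem_weylRoots hu, coroot_neg u⟩
  · exact span_mono (Set.image_mono (subset_weylRoots hR)) (hLvee ▸ subset_span ⟨v, hv, rfl⟩)

theorem IsRootSubsystem.sRefl_mem_weylGroup_of_sum_eq (hΦ : IsRootSystem Φ)
    (hcr : IsCrystallographic Φ) (hsub : IsRootSubsystem Φ Φ') (hR : R ⊆ Φ')
    (hL : span ℤ Φ' = span ℤ R) {β : E} (hβ : β ∈ Φ') (ld lp : List E)
    (hld : ∀ u ∈ ld, u ∈ weylRoots R Φ') (hlp : ∀ u ∈ lp, u ∈ weylRoots R Φ')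
    (hdual : (ld.map coroot).sum = coroot β) (hprim : lp.sum = β) :
    sRefl β ∈ weylGroup R := by
  classical
  have hβΦ := hsub.1 hβ
  by_cases hA : ∃ η ∈ ld, ⟪η, coroot β⟫ = 1
  · obtain ⟨η, hη, h1⟩ := hA
    have hηβ : sRefl η β ∈ Φ' := hsub.2 η (hld η hη).1 β hβ
    obtain ⟨lp', hlp', hprim'⟩ := hsub.exists_list_weylRoots_sum_eq hR hL hηβ
    have hdual' : ((ld.erase η).map coroot).sum = coroot (sRefl η β) := by
      rw [coroot_sRefl, h1, one_smul, ← hdual, ← List.sum_map_erase coroot hη, add_sub_cancel_left]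
    have hlen : (ld.erase η).length < ld.length := List.length_erase_add_one hη ▸ Nat.lt_add_one _
    refine (sRefl_map_mem_iff (hld η hη).2 β).mp ?_
    exact hsub.sRefl_mem_weylGroup_of_sum_eq hΦ hcr hR hL hηβ (ld.erase η) lp'
      (fun u hu => hld u (List.mem_of_mem_erase hu)) hlp' hdual' hprim'
  push Not at hA
  obtain ⟨x, hx, hxβ | ⟨hβx, hlong⟩⟩ :=
    hΦ.exists_eq_or_long_of_sum_coroot_eq hcr hβΦ (fun u hu => hsub.1 (hld u hu).1) hdual hA
  · exact hxβ ▸ (hld x hx).2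
  obtain ⟨η, hη, hηβ | h1⟩ := hΦ.exists_eq_or_inner_coroot_eq_one_of_sum_eq hcr hβΦ
    (hsub.1 (hld x hx).1) (fun u hu => hsub.1 (hlp u hu).1) hprim hβx hlong
  · exact hηβ ▸ (hlp η hη).2
  have hηβ : sRefl η β ∈ Φ' := hsub.2 η (hlp η hη).1 β hβ
  have hprim' : (lp.erase η).sum = sRefl η β := by
    rw [sRefl_apply, h1, one_smul, ← hprim, ← List.sum_erase hη, add_sub_cancel_left]
  have hdual' : ((ld.map (sRefl η)).map coroot).sum = coroot (sRefl η β) := by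
    rw [sum_map_coroot_map, hdual, coroot_map]
  have hlen : (lp.erase η).length < lp.length := List.length_erase_add_one hη ▸ Nat.lt_add_one _
  refine (sRefl_map_mem_iff (hlp η hη).2 β).mp ?_
  refine hsub.sRefl_mem_weylGroup_of_sum_eq hΦ hcr hR hL hηβ (ld.map (sRefl η)) (lp.erase η)
    ?_ (fun u hu => hlp u (List.mem_of_mem_erase hu)) hdual' hprim'
  intro u hu
  obtain ⟨w, hw, rfl⟩ := List.mem_map.mp hu
  exact hsub.weylGroup_apply_mem_weylRoots hR (hlp η hη).2 (hld w hw)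
termination_by (ld.length, lp.length)
decreasing_by
  · exact Prod.Lex.left _ _ hlen
  · simp only [List.length_map]
    exact Prod.Lex.right _ hlen

end Weyl

theorem stmt_2_general (Φ R Φ' : Set V) (hΦ : IsRootSystem Φ) (hcr : IsCrystallographic Φ)
    (hsub : IsRootSubsystem Φ Φ') (hRΦ' : R ⊆ Φ')
    (hL : span ℤ Φ' = span ℤ R) (hLvee : span ℤ (coroot '' Φ') = span ℤ (coroot '' R)) :
    weylGroup Φ' = weylGroup R := by
  refine le_antisymm ((Subgroup.closure_le _).mpr ?_) (Subgroup.closure_mono (Set.image_mono hRΦ'))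
  rintro _ ⟨β, hβ, rfl⟩
  obtain ⟨ld, hld, hdual⟩ := hsub.exists_list_weylRoots_sum_coroot_eq hRΦ' hLvee hβ
  obtain ⟨lp, hlp, hprim⟩ := hsub.exists_list_weylRoots_sum_eq hRΦ' hL hβ
  exact hsub.sRefl_mem_weylGroup_of_sum_eq hΦ hcr hRΦ' hL hβ ld lp hld hlp hdual hprim

theorem stmt_2 (Φ R Φ' : Set V) (hΦ : IsRootSystem Φ) (hcr : IsCrystallographic Φ)
    (hRΦ : R ⊆ Φ) (hRne : R.Nonempty)
    (hsub : IsRootSubsystem Φ Φ') (hRΦ' : R ⊆ Φ')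
    (hL : span ℤ Φ' = span ℤ R) (hLvee : span ℤ (coroot '' Φ') = span ℤ (coroot '' R)) :
    weylGroup Φ' = weylGroup R :=
  stmt_2_general Φ R Φ' hΦ hcr hsub hRΦ' hL hLvee
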